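/- Let Φ = (Φ_{ij})_{i,j=1,…,n} be a quantum Markov chain on n vertices with internal dimension k: each Φ_{ij} : M_k → M_k is a positive linear map, Σ_{i=1}^n Tr(Φ_{ij}(ρ)) = Tr(ρ) for all j and all ρ ∈ M_k, and Φ acts on n-tuples by (Φρ)_i = Σ_j Φ_{ij}(ρ_j). Assume that for each vertex i the map I − ℚ_iΦ on (M_k)^n is invertible, and define the mean hitting time operators K_{ij} := [Φ(I − ℚ_iΦ)^{−2}]_{ij}, the block matrix K := (K_{ij}), its block diagonal D := diag(K_{11},…,K_{nn}), and L := K − (K − D)Φ (all block operator matrices with blocks that are linear maps on M_k). Then for all i, j, every positive semidefinite ρ ∈ M_k and every c ∈ ℝ, Tr(L_{ij}(cρ)) = c·Tr(ρ). -/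
import Mathlib


open Matrix
open scoped ComplexOrder

noncomputable section

/-- The internal-state algebra `M_k`. -/
abbrev Mk (k : ℕ) : Type := Matrix (Fin k) (Fin k) ℂ

/-- The action of a block matrix `Φ = (Φ_{ij})` of maps on `(M_k)^n`:
`(Φρ)_i = Σ_j Φ_{ij}(ρ_j)`. -/
def QMCEnd {n k : ℕ} (Φ : Fin n → Fin n → Module.End ℂ (Mk k)) :
    Module.End ℂ (Fin n → Mk k) :=
  LinearMap.pi (fun i => ∑ j, (Φ i j) ∘ₗ LinearMap.proj j)

/-- The projection `ℙ_i` on `(M_k)^n` keeping only the `i`-th component. -/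
def Pvert {n k : ℕ} (i : Fin n) : Module.End ℂ (Fin n → Mk k) :=
  (LinearMap.single ℂ (fun _ : Fin n => Mk k) i).comp (LinearMap.proj i)

/-- The `(i,j)` block of a map `S` on `(M_k)^n`. -/
def blockOf {n k : ℕ} (S : Module.End ℂ (Fin n → Mk k)) (i j : Fin n) :
    Module.End ℂ (Mk k) :=
  (LinearMap.proj i) ∘ₗ S ∘ₗ (LinearMap.single ℂ (fun _ : Fin n => Mk k) j)

/-- Rebuild a map on `(M_k)^n` from blocks. -/
def ofBlocks {n k : ℕ} (K : Fin n → Fin n → Module.End ℂ (Mk k)) :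
    Module.End ℂ (Fin n → Mk k) :=
  LinearMap.pi (fun i => ∑ j, (K i j) ∘ₗ LinearMap.proj j)

/-- Auxiliary: each block `L_{ij}` is trace preserving. -/
theorem stmt12_aux {n k : ℕ} (Φ : Fin n → Fin n → Module.End ℂ (Mk k))
    (htr : ∀ j, ∀ ρ : Mk k, (∑ i, ((Φ i j) ρ).trace) = ρ.trace)
    (hinv : ∀ i : Fin n, IsUnit (1 - (1 - Pvert (k := k) i) * QMCEnd Φ))
    (K : Fin n → Fin n → Module.End ℂ (Mk k))
    (hK : ∀ i j, K i j =
      blockOf (QMCEnd Φ * (Ring.inverse (1 - (1 - Pvert (k := k) i) * QMCEnd Φ)) ^ 2) i j)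
    (D : Module.End ℂ (Fin n → Mk k))
    (hD : D = LinearMap.pi (fun i => (K i i) ∘ₗ LinearMap.proj i))
    (L : Module.End ℂ (Fin n → Mk k))
    (hL : L = ofBlocks K - (ofBlocks K - D) * QMCEnd Φ) :
    ∀ (i j : Fin n) (ρ : Mk k),
      ((blockOf L i j) ρ).trace = ρ.trace := by
  intro i j ρ
  classical
  set E := QMCEnd Φ with hE
  set A : Module.End ℂ (Fin n → Mk k) :=
    1 - (1 - Pvert (k := k) i) * E with hA
  set B := Ring.inverse A with hB
  have hBA : B * A = 1 := Ring.inverse_mul_cancel A (hinv i)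
  -- basic applications
  have hEapp : ∀ (y : Fin n → Mk k) (a : Fin n), E y a = ∑ m, Φ a m (y m) := by
    intro y a
    simp [hE, QMCEnd, LinearMap.pi_apply, LinearMap.sum_apply]
  have hPapp : ∀ (y : Fin n → Mk k), Pvert (k := k) i y = Pi.single i (y i) := by
    intro y
    simp [Pvert, LinearMap.single_apply]
  have hblock : ∀ (S : Module.End ℂ (Fin n → Mk k)) (a b : Fin n) (x : Mk k),
      blockOf S a b x = S (Pi.single b x) a := by
    intro S a b x
    simp [blockOf, LinearMap.single_apply]
  -- total trace invariance
  have hT : ∀ y : Fin n → Mk k, ∑ a, (E y a).trace = ∑ a, (y a).trace := by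
    intro y
    simp only [hEapp, Matrix.trace_sum]
    rw [Finset.sum_comm]
    simp [htr]
  -- row identity: ofBlocks K y i = (E * B^2) y i
  set S : Module.End ℂ (Fin n → Mk k) := E * B ^ 2 with hS
  have hrow : ∀ y : Fin n → Mk k, ofBlocks K y i = S y i := by
    intro y
    have h1 : ofBlocks K y i = ∑ m, K i m (y m) := by
      simp [ofBlocks, LinearMap.pi_apply, LinearMap.sum_apply]
    rw [h1]
    have h2 : ∀ m, K i m (y m) = S (Pi.single m (y m)) i := by
      intro m
      rw [hK i m, hblock]
    simp only [h2]
    rw [← Finset.sum_apply, ← map_sum, Finset.univ_sum_single]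
  have hDrow : ∀ y : Fin n → Mk k, D y i = S (Pi.single i (y i)) i := by
    intro y
    rw [hD]
    simp only [LinearMap.pi_apply, LinearMap.comp_apply, LinearMap.proj_apply]
    rw [hK i i, hblock]
  -- L row identity
  have hLrow : ∀ y : Fin n → Mk k, L y i = E (B y) i := by
    intro y
    rw [hL]
    have : (ofBlocks K - (ofBlocks K - D) * E) y i
        = ofBlocks K y i - (ofBlocks K (E y) i - D (E y) i) := by
      simp [LinearMap.sub_apply, Module.End.mul_apply, Pi.sub_apply]
    rw [this, hrow, hrow, hDrow]
    have hPE : S (Pi.single i (E y i)) i = S (Pvert (k := k) i (E y)) i := by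
      rw [hPapp]
    rw [hPE]
    have hcomb : S y i - (S (E y) i - S (Pvert (k := k) i (E y)) i) = S (A y) i := by
      have : A y = y - ((E y) - Pvert (k := k) i (E y)) := by
        simp only [hA, Module.End.mul_apply, LinearMap.sub_apply, LinearMap.sub_apply,
          Module.End.one_apply, LinearMap.sub_apply]
      rw [this]
      simp only [map_sub]
      simp only [Pi.sub_apply]
    rw [hcomb]
    have : S (A y) = (S * A) y := rfl
    rw [this]
    have hSA : S * A = E * B := by
      rw [hS, sq, mul_assoc, mul_assoc, hBA, mul_one]
    rw [hSA]
    rfl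
  -- main computation
  set y : Fin n → Mk k := Pi.single j ρ with hy
  set x := B y with hx
  have hxy : A x = y := by
    rw [hx]
    have : A (B y) = (A * B) y := rfl
    rw [this, Ring.mul_inverse_cancel A (hinv i)]
    rfl
  have hrel : x = y + (E x - Pi.single i (E x i)) := by
    have h1 : A x = x - (E x - Pvert (k := k) i (E x)) := by
      simp only [hA, Module.End.mul_apply, LinearMap.sub_apply, Module.End.one_apply]
    rw [hxy] at h1
    rw [hPapp] at h1
    rw [h1]
    abel
  -- traces
  have hsingle : ∀ (b : Fin n) (M : Mk k),
      ∑ a, ((Pi.single b M : Fin n → Mk k) a).trace = M.trace := by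
    intro b M
    rw [Finset.sum_eq_single b]
    · simp
    · intro c _ hc; simp [Pi.single_eq_of_ne hc]
    · simp
  have htrace : ∑ a, (x a).trace = ρ.trace + (∑ a, (E x a).trace - (E x i).trace) := by
    have := congrArg (fun z : Fin n → Mk k => ∑ a, (z a).trace) hrel
    simp only [Pi.add_apply, Pi.sub_apply, Matrix.trace_add, Matrix.trace_sub,
      Finset.sum_add_distrib, Finset.sum_sub_distrib] at this
    rw [this, hsingle, hsingle]
  rw [hT x] at htrace
  have hfin : (E x i).trace = ρ.trace := by
    linear_combination htrace
  rw [hblock]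
  rw [← hy]
  have : L y i = E x i := hLrow y
  rw [this, hfin]

/-- For a QMC `Φ` on `n` vertices with internal dimension `k`, with
mean hitting time operators `K_{ij} = [Φ(I − ℚ_iΦ)^{−2}]_{ij}`, block diagonal
`D = diag(K_{11},…,K_{nn})` and `L = K − (K − D)Φ`, one has
`Tr(L_{ij}(cρ)) = c·Tr(ρ)` for all `i, j`, all positive semidefinite `ρ` and `c ∈ ℝ`. -/
theorem stmt12 {n k : ℕ} (Φ : Fin n → Fin n → Module.End ℂ (Mk k))
    (hpos : ∀ i j, ∀ ρ : Mk k, ρ.PosSemidef → ((Φ i j) ρ).PosSemidef)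
    (htr : ∀ j, ∀ ρ : Mk k, (∑ i, ((Φ i j) ρ).trace) = ρ.trace)
    (hinv : ∀ i : Fin n, IsUnit (1 - (1 - Pvert (k := k) i) * QMCEnd Φ))
    (K : Fin n → Fin n → Module.End ℂ (Mk k))
    (hK : ∀ i j, K i j =
      blockOf (QMCEnd Φ * (Ring.inverse (1 - (1 - Pvert (k := k) i) * QMCEnd Φ)) ^ 2) i j)
    (D : Module.End ℂ (Fin n → Mk k))
    (hD : D = LinearMap.pi (fun i => (K i i) ∘ₗ LinearMap.proj i))
    (L : Module.End ℂ (Fin n → Mk k))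
    (hL : L = ofBlocks K - (ofBlocks K - D) * QMCEnd Φ) :
    ∀ (i j : Fin n) (ρ : Mk k) (c : ℝ), ρ.PosSemidef →
      ((blockOf L i j) ((c : ℂ) • ρ)).trace = (c : ℂ) * ρ.trace := by
  intro i j ρ c _
  rw [_root_.map_smul, Matrix.trace_smul, stmt12_aux Φ htr hinv K hK D hD L hL i j ρ]
  simp [smul_eq_mul]
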